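/- arXiv:2411.06430 — 3 statements merged into one kernel-verified Lean document; each statement's English description precedes it below -/
import Mathlib

section
/- For all natural numbers a, b ≥ 1 with (a,b) ≠ (1,1), gcd(a,b) = (((−3^(ab(ab+a+b))) mod ((3^(a²b) − 1)(3^(ab²) − 1))) mod 3^(ab)) − 2, where the computation is carried out in the integers and x mod y denotes the unique representative in [0, y) for y > 0. -/
/-!
Put `x = 3 ^ (a * b)`, `d = gcd a b` and `M = (x ^ a - 1) * (x ^ b - 1)`, and write
`x ^ a - 1 = (x ^ d - 1) * S_a`, `x ^ b - 1 = (x ^ d - 1) * S_b`. Then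
`x ^ (a * b + a + b) = x ^ b + (x ^ a - 1) * x ^ b * (1 + x ^ a + ⋯ + x ^ (a * b))`, and modulo
`x ^ b - 1` the last factor is `1 + d * S_b`, because `a * k % b` runs `d` times through the
multiples of `d` below `b`. Hence `-x ^ (a * b + a + b)` is congruent modulo `M` to
`(x ^ b - 1) * (x ^ a - 2 - d * S_a) - x ^ a`, which lies in `[0, M)` as soon as `x ≥ 2 * d + 3`
and is `≡ d + 2` modulo `x`.
-/

open Finset

section PeriodicSums

variable {M : Type*} [AddCommMonoid M]

theorem sum_range_mul_comp_mod (f : ℕ → M) (d B : ℕ) :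
    ∑ k ∈ range (d * B), f (k % B) = d • ∑ j ∈ range B, f j := by
  induction d with
  | zero => simp
  | succ d ih =>
    rw [Nat.succ_mul, sum_range_add, ih, succ_nsmul]
    congr 1
    refine sum_congr rfl fun j hj => ?_
    rw [Nat.mul_add_mod', Nat.mod_eq_of_lt (mem_range.mp hj)]

theorem sum_range_comp_mul_mod_of_coprime (f : ℕ → M) {A B : ℕ} (h : A.Coprime B) :
    ∑ j ∈ range B, f (A * j % B) = ∑ j ∈ range B, f j := by
  have hinj : Set.InjOn (fun j => A * j % B) (range B) := fun i hi j hj hij => by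
    have := Nat.ModEq.cancel_left_of_coprime (Nat.coprime_comm.mp h) hij
    rwa [Nat.ModEq, Nat.mod_eq_of_lt (mem_range.mp hi), Nat.mod_eq_of_lt (mem_range.mp hj)] at this
  have hmaps : Set.MapsTo (fun j => A * j % B) (range B) (range B) := fun j hj =>
    mem_range.mpr (Nat.mod_lt _ (Nat.pos_of_ne_zero fun h0 => by simp [h0] at hj))
  have hbij := ((range B).finite_toSet.injOn_iff_bijOn_of_mapsTo hmaps).mp hinj
  exact sum_nbij _ hmaps hinj hbij.surjOn fun _ _ => rfl

theorem sum_range_comp_mul_mod (f : ℕ → M) (a b : ℕ) :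
    ∑ k ∈ range b, f (a * k % b) =
      Nat.gcd a b • ∑ j ∈ range (b / Nat.gcd a b), f (Nat.gcd a b * j) := by
  obtain ⟨A, hA⟩ := Nat.gcd_dvd_left a b
  obtain ⟨B, hB⟩ := Nat.gcd_dvd_right a b
  set d := Nat.gcd a b
  rcases Nat.eq_zero_or_pos d with hd | hd
  · simp [hd, Nat.eq_zero_of_gcd_eq_zero_right hd]
  have hAB : A.Coprime B := by
    have : d * Nat.gcd A B = d * 1 := by rw [← Nat.gcd_mul_left, ← hA, ← hB, mul_one]
    exact Nat.eq_of_mul_eq_mul_left hd this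
  calc ∑ k ∈ range b, f (a * k % b)
      = ∑ k ∈ range (d * B), (fun j => f (d * (A * j % B))) (k % B) := by
        rw [← hB]
        refine sum_congr rfl fun k _ => ?_
        rw [hA, hB, Nat.mul_assoc, Nat.mul_mod_mul_left]
        simp only [Nat.mul_mod_mod]
    _ = d • ∑ j ∈ range B, f (d * j) := by
        rw [sum_range_mul_comp_mod (fun j => f (d * (A * j % B))),
          sum_range_comp_mul_mod_of_coprime (fun j => f (d * j)) hAB]
    _ = _ := by rw [hB, Nat.mul_div_cancel_left _ hd]

end PeriodicSums

theorem pow_modEq_pow_mod (x : ℤ) (n b : ℕ) : x ^ n ≡ x ^ (n % b) [ZMOD x ^ b - 1] :=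
  calc x ^ n = (x ^ b) ^ (n / b) * x ^ (n % b) := by rw [← pow_mul, ← pow_add, Nat.div_add_mod]
    _ ≡ 1 ^ (n / b) * x ^ (n % b) [ZMOD x ^ b - 1] := ((Int.modEq_sub _ _).pow _).mul_right _
    _ = x ^ (n % b) := by rw [one_pow, one_mul]

def powSubOneQuot (x : ℤ) (d n : ℕ) : ℤ := ∑ j ∈ range (n / d), (x ^ d) ^ j

theorem powSubOneQuot_mul (x : ℤ) {d n : ℕ} (h : d ∣ n) :
    powSubOneQuot x d n * (x ^ d - 1) = x ^ n - 1 := by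
  rw [powSubOneQuot, geom_sum_mul, ← pow_mul, Nat.mul_div_cancel' h]

theorem sum_pow_mul_modEq (x : ℤ) (a b : ℕ) :
    ∑ k ∈ range b, x ^ (a * k) ≡
      Nat.gcd a b * powSubOneQuot x (Nat.gcd a b) b [ZMOD x ^ b - 1] :=
  calc ∑ k ∈ range b, x ^ (a * k)
      ≡ ∑ k ∈ range b, x ^ (a * k % b) [ZMOD x ^ b - 1] :=
        Int.ModEq.sum fun k _ => pow_modEq_pow_mod x _ b
    _ = _ := by
        rw [sum_range_comp_mul_mod (fun n => x ^ n), nsmul_eq_mul, powSubOneQuot]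
        simp only [pow_mul]

def negPowResidue (x : ℤ) (a b : ℕ) : ℤ :=
  (x ^ b - 1) * (x ^ a - 2 - Nat.gcd a b * powSubOneQuot x (Nat.gcd a b) a) - x ^ a

theorem neg_pow_modEq_negPowResidue (x : ℤ) (a b : ℕ) :
    -x ^ (a * b + a + b) ≡ negPowResidue x a b [ZMOD (x ^ a - 1) * (x ^ b - 1)] := by
  rw [negPowResidue, show a * b + a + b = a * (b + 1) + b by ring, pow_add]
  set d := Nat.gcd a b
  set Sa := powSubOneQuot x d a
  set Sb := powSubOneQuot x d b
  set G := ∑ k ∈ range (b + 1), x ^ (a * k)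
  have hSa : Sa * (x ^ d - 1) = x ^ a - 1 := powSubOneQuot_mul x (Nat.gcd_dvd_left a b)
  have hSb : Sb * (x ^ d - 1) = x ^ b - 1 := powSubOneQuot_mul x (Nat.gcd_dvd_right a b)
  have hG : G * (x ^ a - 1) = x ^ (a * (b + 1)) - 1 := by
    simp only [G, pow_mul]; exact geom_sum_mul _ _
  have hGmod : x ^ b * G ≡ d * Sb + 1 [ZMOD x ^ b - 1] :=
    calc x ^ b * G ≡ 1 * G [ZMOD x ^ b - 1] := (Int.modEq_sub _ _).mul_right G
      _ = ∑ k ∈ range b, x ^ (a * k) + x ^ (a * b) := by rw [one_mul]; exact sum_range_succ _ _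
      _ ≡ d * Sb + 1 [ZMOD x ^ b - 1] :=
        (sum_pow_mul_modEq x a b).add (by simpa using pow_modEq_pow_mod x (a * b) b)
  obtain ⟨t, ht⟩ := (Int.modEq_iff_dvd.mp hGmod)
  refine Int.modEq_iff_dvd.mpr ⟨1 - t, ?_⟩
  linear_combination -x ^ b * hG - (x ^ a - 1) * ht - d * Sb * hSa + d * Sa * hSb

theorem negPowResidue_lt {x : ℤ} (hx : 1 ≤ x) (a b : ℕ) :
    negPowResidue x a b < (x ^ a - 1) * (x ^ b - 1) := by
  have hSa : 0 ≤ powSubOneQuot x (Nat.gcd a b) a :=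
    sum_nonneg fun j _ => pow_nonneg (pow_nonneg (by linarith) _) j
  have hxa : 1 ≤ x ^ a := one_le_pow₀ hx
  have hxb : 1 ≤ x ^ b := one_le_pow₀ hx
  rw [negPowResidue]
  nlinarith [mul_nonneg (sub_nonneg.mpr hxb) (mul_nonneg (Nat.cast_nonneg (Nat.gcd a b)) hSa)]

theorem negPowResidue_pos {x : ℤ} {a b : ℕ} (ha : 0 < a) (hb : 0 < b)
    (hx : 2 * (Nat.gcd a b : ℤ) + 3 ≤ x) : 0 < negPowResidue x a b := by
  set d := Nat.gcd a b
  set S := powSubOneQuot x d a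
  have hd : 0 < d := Nat.gcd_pos_of_pos_left b ha
  have hx1 : 1 ≤ x := by linarith
  have hy : x ≤ x ^ d := le_self_pow₀ hx1 hd.ne'
  have hxa : x ≤ x ^ a := le_self_pow₀ hx1 ha.ne'
  have hxb : x ≤ x ^ b := le_self_pow₀ hx1 hb.ne'
  have hS : S * (x ^ d - 1) = x ^ a - 1 := powSubOneQuot_mul x (Nat.gcd_dvd_left a b)
  have hS_pos : 0 < S := by
    by_contra! h
    nlinarith
  -- `x ^ d - 1 ≥ 2 d + 2` makes `d * S` less than half of `x ^ a - 1`
  have hdS : 2 * (x ^ a - 2 - d * S) ≥ x ^ a - 1 := by nlinarith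
  rw [negPowResidue]
  nlinarith

theorem negPowResidue_modEq {x : ℤ} {a b : ℕ} (ha : 0 < a) (hb : 0 < b) :
    negPowResidue x a b ≡ Nat.gcd a b + 2 [ZMOD x] := by
  set d := Nat.gcd a b
  set S := powSubOneQuot x d a
  have hpow : ∀ {n : ℕ}, 0 < n → x ^ n ≡ 0 [ZMOD x] := fun hn =>
    Int.modEq_zero_iff_dvd.mpr (dvd_pow_self x hn.ne')
  have hS : S ≡ 1 [ZMOD x] := by
    have h : S * (0 - 1) ≡ 0 - 1 [ZMOD x] :=
      calc S * (0 - 1) ≡ S * (x ^ d - 1) [ZMOD x] :=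
            ((hpow (Nat.gcd_pos_of_pos_left b ha)).sub_right 1).symm.mul_left S
        _ = x ^ a - 1 := powSubOneQuot_mul x (Nat.gcd_dvd_left a b)
        _ ≡ 0 - 1 [ZMOD x] := (hpow ha).sub_right 1
    simpa using h.neg
  have h := (((hpow hb).sub_right 1).mul
    (((hpow ha).sub_right 2).sub ((Int.ModEq.refl (d : ℤ)).mul hS))).sub (hpow ha)
  rw [negPowResidue]
  convert h using 1
  ring

theorem neg_pow_emod_emod_eq_gcd_add_two {x : ℤ} {a b : ℕ} (ha : 0 < a) (hb : 0 < b)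
    (hx : 2 * (Nat.gcd a b : ℤ) + 3 ≤ x) :
    (-x ^ (a * b + a + b)) % ((x ^ a - 1) * (x ^ b - 1)) % x = Nat.gcd a b + 2 := by
  rw [(neg_pow_modEq_negPowResidue x a b).eq,
    Int.emod_eq_of_lt (negPowResidue_pos ha hb hx).le (negPowResidue_lt (by linarith) a b),
    (negPowResidue_modEq ha hb).eq, Int.emod_eq_of_lt (by positivity) (by linarith)]

theorem two_mul_add_three_le_three_pow {n : ℕ} (hn : 2 ≤ n) : 2 * n + 3 ≤ 3 ^ n := by
  induction n, hn using Nat.le_induction with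
  | base => norm_num
  | succ n _ ih => rw [pow_succ]; omega

theorem gcd_mod_mod_base3 (a b : ℕ) (ha : 1 ≤ a) (hb : 1 ≤ b) (hab : (a, b) ≠ (1, 1)) :
    (Nat.gcd a b : ℤ) =
      ((-(3 : ℤ) ^ (a * b * (a * b + a + b)))
          % (((3 : ℤ) ^ (a ^ 2 * b) - 1) * ((3 : ℤ) ^ (a * b ^ 2) - 1)))
        % (3 : ℤ) ^ (a * b) - 2 := by
  have ha_le : a ≤ a * b := Nat.le_mul_of_pos_right a hb
  have hb_le : b ≤ a * b := Nat.le_mul_of_pos_left b ha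
  have hab2 : 2 ≤ a * b := by
    by_contra! h
    exact hab (Prod.ext (by omega) (by omega))
  have hx : 2 * (Nat.gcd a b : ℤ) + 3 ≤ 3 ^ (a * b) := by
    have hd : Nat.gcd a b ≤ a * b := (Nat.gcd_le_left b ha).trans ha_le
    exact_mod_cast (by omega : 2 * Nat.gcd a b + 3 ≤ 2 * (a * b) + 3).trans
      (two_mul_add_three_le_three_pow hab2)
  have key := neg_pow_emod_emod_eq_gcd_add_two ha hb hx
  simp only [← pow_mul] at key
  rw [show a ^ 2 * b = a * b * a by ring, show a * b ^ 2 = a * b * b by ring, key]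
  ring
end

section
/- For all natural numbers a, b ≥ 1 with (a,b) ≠ (1,1), gcd(a,b) = (⌊4^(ab(ab+a+b)) / ((4^(a²b) − 1)(4^(ab²) − 1))⌋ mod 4^(ab)) − 1. -/
/-!
Put `q = 4 ^ (a * b)`. The quotient of `q ^ (ab + a + b)` by `(q ^ a - 1) (q ^ b - 1)`
is `S = ∑ q ^ (a i - b j)` over the lattice points `0 ≤ i ≤ b`, `0 ≤ b j ≤ a i` of the triangle
below the segment from `(0, 0)` to `(b, a)`; the remainder is small because `q` is large
compared to `b`. Modulo `q` only the terms with `a i = b j` survive, i.e. the lattice points on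
that segment, and there are `gcd a b + 1` of them.
-/

open Finset

theorem Nat.card_filter_dvd_range_succ (d n : ℕ) :
    #{i ∈ range (n + 1) | d ∣ i} = n / d + 1 := by
  induction n with
  | zero => simp [filter_singleton]
  | succ n ih =>
    rw [range_add_one, filter_insert, Nat.succ_div]
    by_cases h : d ∣ n + 1
    · rw [if_pos h, card_insert_of_notMem (by simp), ih, if_pos h]
    · rw [if_neg h, ih, if_neg h]

theorem Nat.dvd_mul_iff_div_gcd_dvd {a b : ℕ} (hb : 0 < b) (i : ℕ) :
    b ∣ a * i ↔ b / Nat.gcd a b ∣ i := by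
  rw [Nat.div_dvd_iff_dvd_mul (Nat.gcd_dvd_right a b) (Nat.gcd_pos_of_pos_right a hb)]
  constructor
  · intro h
    simpa only [Nat.gcd_mul_right, mul_comm i] using Nat.dvd_gcd h (dvd_mul_right b i)
  · exact fun h => h.trans (Nat.mul_dvd_mul_right (Nat.gcd_dvd_left a b) i)

theorem Nat.card_filter_dvd_mul_range_succ {a b : ℕ} (hb : 0 < b) :
    #{i ∈ range (b + 1) | b ∣ a * i} = Nat.gcd a b + 1 := by
  simp only [Nat.dvd_mul_iff_div_gcd_dvd hb]
  rw [Nat.card_filter_dvd_range_succ, Nat.div_div_self (Nat.gcd_dvd_right a b) hb.ne']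

/-- `∑_{0 ≤ b j ≤ a i} q ^ (a i - b j)`, reindexed by `j ↦ a i / b - j`. -/
def triangleRow (q a b i : ℕ) : ℕ :=
  q ^ (a * i % b) * ∑ j ∈ range (a * i / b + 1), (q ^ b) ^ j

def triangleSum (q a b : ℕ) : ℕ := ∑ i ∈ range (b + 1), triangleRow q a b i

section

variable {q : ℕ} (a b : ℕ)

theorem sub_one_mul_triangleRow_add (hq : 0 < q) (i : ℕ) :
    (q ^ b - 1) * triangleRow q a b i + q ^ (a * i % b) = q ^ (a * i + b) := by
  have hqb : q ^ b - 1 + 1 = q ^ b := Nat.sub_add_cancel (Nat.one_le_pow _ _ hq)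
  calc (q ^ b - 1) * triangleRow q a b i + q ^ (a * i % b)
      = q ^ (a * i % b) *
          ((∑ j ∈ range (a * i / b + 1), (q ^ b - 1 + 1) ^ j) * (q ^ b - 1) + 1) := by
        rw [triangleRow, hqb]; ring
    _ = q ^ (a * i % b + b * (a * i / b) + b) := by
        rw [geom_sum_mul_add, hqb, ← pow_mul, pow_add, pow_add, mul_add, pow_add, mul_one]; ring
    _ = q ^ (a * i + b) := by rw [Nat.mod_add_div]

theorem triangleSum_decomposition (hq : 0 < q) :
    q ^ (a * b + a + b) = (q ^ a - 1) * (q ^ b - 1) * triangleSum q a b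
      + ((q ^ a - 1) * ∑ i ∈ range (b + 1), q ^ (a * i % b) + q ^ b) := by
  have hqa : q ^ a - 1 + 1 = q ^ a := Nat.sub_add_cancel (Nat.one_le_pow _ _ hq)
  have rows : (q ^ b - 1) * triangleSum q a b + ∑ i ∈ range (b + 1), q ^ (a * i % b)
      = q ^ b * ∑ i ∈ range (b + 1), (q ^ a - 1 + 1) ^ i := by
    rw [triangleSum, mul_sum, ← sum_add_distrib, mul_sum, hqa]
    refine sum_congr rfl fun i _ => ?_
    rw [sub_one_mul_triangleRow_add a b hq, ← pow_mul, pow_add, mul_comm]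
  calc q ^ (a * b + a + b)
      = q ^ b * ((∑ i ∈ range (b + 1), (q ^ a - 1 + 1) ^ i) * (q ^ a - 1) + 1) := by
        rw [geom_sum_mul_add, hqa, ← pow_mul, ← pow_add]; ring_nf
    _ = _ := by
        rw [mul_assoc, ← add_assoc, ← mul_add, rows]; ring

theorem four_mul_sum_pow_mod_le (hb : 0 < b) (hq : 4 * (b + 1) ≤ q) :
    4 * ∑ i ∈ range (b + 1), q ^ (a * i % b) ≤ q ^ b := by
  have hterm : ∀ i ∈ range (b + 1), q ^ (a * i % b) ≤ q ^ (b - 1) := fun i _ =>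
    Nat.pow_le_pow_right (by omega) (Nat.le_sub_one_of_lt (Nat.mod_lt _ hb))
  calc 4 * ∑ i ∈ range (b + 1), q ^ (a * i % b) ≤ 4 * ((b + 1) * q ^ (b - 1)) := by
        grw [sum_le_sum hterm, sum_const, card_range, smul_eq_mul]
    _ ≤ q * q ^ (b - 1) := by rw [← mul_assoc]; gcongr
    _ = q ^ b := by rw [← pow_succ', Nat.sub_add_cancel hb]

theorem pow_div_eq_triangleSum (ha : 0 < a) (hb : 0 < b) (hq : 4 * (b + 1) ≤ q) :
    q ^ (a * b + a + b) / ((q ^ a - 1) * (q ^ b - 1)) = triangleSum q a b := by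
  have hqa : q ≤ q ^ a := Nat.le_self_pow ha.ne' q
  have hqb : q ≤ q ^ b := Nat.le_self_pow hb.ne' q
  have hT := four_mul_sum_pow_mod_le a b hb hq
  set T := ∑ i ∈ range (b + 1), q ^ (a * i % b)
  have hR : (q ^ a - 1) * T + q ^ b < (q ^ a - 1) * (q ^ b - 1) := by
    obtain ⟨A, hA⟩ : ∃ A, q ^ a = A + 1 := ⟨q ^ a - 1, by omega⟩
    obtain ⟨B, hB⟩ : ∃ B, q ^ b = B + 1 := ⟨q ^ b - 1, by omega⟩
    rw [hA] at hqa ⊢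
    rw [hB] at hqb hT ⊢
    rw [Nat.add_sub_cancel, Nat.add_sub_cancel]
    nlinarith [Nat.mul_le_mul_left A hT]
  rw [triangleSum_decomposition a b (by omega), Nat.mul_add_div (by nlinarith),
    Nat.div_eq_of_lt hR, add_zero]

theorem triangleRow_mod (hq : 1 < q) (hb : 0 < b) (i : ℕ) :
    triangleRow q a b i % q = if b ∣ a * i then 1 else 0 := by
  split_ifs with h
  · obtain ⟨k, hk⟩ : q ∣ ∑ j ∈ range (a * i / b), (q ^ b) ^ (j + 1) :=
      dvd_sum fun j _ => (dvd_pow_self q hb.ne').trans (dvd_pow_self _ j.succ_ne_zero)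
    rw [triangleRow, Nat.mod_eq_zero_of_dvd h, pow_zero, one_mul, sum_range_succ', hk,
      pow_zero, Nat.mul_add_mod, Nat.mod_eq_of_lt hq]
  · have hr : a * i % b ≠ 0 := fun h0 => h (Nat.dvd_of_mod_eq_zero h0)
    exact Nat.mod_eq_zero_of_dvd ((dvd_pow_self q hr).mul_right _)

theorem triangleSum_mod (hb : 0 < b) (hq : b + 1 < q) :
    triangleSum q a b % q = Nat.gcd a b + 1 := by
  rw [triangleSum, sum_nat_mod, sum_congr rfl fun i _ => triangleRow_mod a b (by omega) hb i,
    sum_boole, Nat.cast_id, Nat.card_filter_dvd_mul_range_succ hb]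
  exact Nat.mod_eq_of_lt (by have := Nat.le_of_dvd hb (Nat.gcd_dvd_right a b); omega)

theorem pow_div_mod_eq_gcd_add_one (ha : 0 < a) (hb : 0 < b) (hq : 4 * (b + 1) ≤ q) :
    q ^ (a * b + a + b) / ((q ^ a - 1) * (q ^ b - 1)) % q = Nat.gcd a b + 1 := by
  rw [pow_div_eq_triangleSum a b ha hb hq, triangleSum_mod a b hb (by omega)]

end

theorem gcd_div_mod_base4 (a b : ℕ) (ha : 1 ≤ a) (hb : 1 ≤ b) (hab : (a, b) ≠ (1, 1)) :
    Nat.gcd a b =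
      (4 ^ (a * b * (a * b + a + b)) / ((4 ^ (a ^ 2 * b) - 1) * (4 ^ (a * b ^ 2) - 1)))
          % 4 ^ (a * b) - 1 := by
  have hab2 : 2 ≤ a * b := by
    have : a * b ≠ 1 := fun h => hab (Prod.ext_iff.mpr (mul_eq_one.mp h))
    have := Nat.mul_pos ha hb
    omega
  have hq : 4 * (b + 1) ≤ 4 ^ (a * b) := by
    have hb' : b ≤ a * b := Nat.le_mul_of_pos_left b ha
    calc 4 * (b + 1) ≤ 4 * 2 ^ b := by have := Nat.lt_two_pow_self (n := b); omega
      _ = 2 ^ (b + 2) := by ring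
      _ ≤ 2 ^ (2 * (a * b)) := Nat.pow_le_pow_right (by norm_num) (by omega)
      _ = 4 ^ (a * b) := by rw [pow_mul]; norm_num
  rw [pow_mul, show a ^ 2 * b = a * b * a by ring, show a * b ^ 2 = a * b * b by ring,
    pow_mul 4 (a * b) a, pow_mul 4 (a * b) b, pow_div_mod_eq_gcd_add_one a b ha hb hq,
    Nat.add_sub_cancel]
end

section
/- For all natural numbers a, b ≥ 1 with a·b ≥ 5, gcd(a,b) + 1 = ⌊2^(ab(ab+a+b)) / ((2^(a²b) − 1)(2^(ab²) − 1))⌋ mod 2^(ab). -/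
open Finset

lemma tel (x : ℤ) (a M : ℕ) :
    (x ^ a - 1) * ∑ i ∈ range (M / a + 1), x ^ (M - i * a)
      = x ^ (M + a) - x ^ (M % a) := by
  have h : ∀ i ∈ range (M / a + 1), x ^ (M - i * a)
      = x ^ (M % a) * (x ^ a) ^ (M / a - i) := by
    intro i hi
    simp only [mem_range, Nat.lt_succ_iff] at hi
    rw [← pow_mul, ← pow_add]
    congr 1
    have h1 : i * a ≤ M / a * a :=
      Nat.mul_le_mul_right a hi
    have h2 : M / a * a ≤ M := Nat.div_mul_le_self M a
    have h3 : M % a + M / a * a = M := Nat.mod_add_div' M a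
    have h4 : a * (M / a - i) = M / a * a - i * a := by
      rw [Nat.mul_sub]; ring_nf
    omega
  rw [Finset.sum_congr rfl h, ← Finset.mul_sum]
  have h5 : ∑ i ∈ range (M / a + 1), (x ^ a) ^ (M / a - i)
      = ∑ i ∈ range (M / a + 1), (x ^ a) ^ i := by
    rw [← Finset.sum_range_reflect]
    apply Finset.sum_congr rfl
    intro i hi
    simp only [mem_range, Nat.lt_succ_iff] at hi
    congr 1
    omega
  rw [h5]
  have := geom_sum_mul (x ^ a) (M / a + 1)
  rw [← pow_mul] at this
  have hc : (x ^ a - 1) * (x ^ (M % a) * ∑ i ∈ range (M / a + 1), (x ^ a) ^ i)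
      = x ^ (M % a) * ((∑ i ∈ range (M / a + 1), (x ^ a) ^ i) * (x ^ a - 1)) := by ring
  rw [hc, this, mul_sub, ← pow_add, mul_one]
  congr 2
  have h6 : a * (M / a + 1) = a * (M / a) + a := by ring
  have h7 := Nat.mod_add_div M a
  omega

lemma key (x : ℤ) (a b : ℕ) (hb : 1 ≤ b) :
    (x ^ a - 1) * (x ^ b - 1) *
        (∑ j ∈ range (a + 1), ∑ i ∈ range ((a * b - j * b) / a + 1),
          x ^ (a * b - j * b - i * a))
      + x ^ a
      + (x ^ b - 1) * (∑ j ∈ range (a + 1), x ^ ((a * b - j * b) % a))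
      = x ^ (a * b + a + b) := by
  have h1 : ∀ j ∈ range (a + 1),
      (x ^ a - 1) * ∑ i ∈ range ((a * b - j * b) / a + 1), x ^ (a * b - j * b - i * a)
        = x ^ (a * b - j * b + a) - x ^ ((a * b - j * b) % a) := fun j _ => tel x a _
  have h2 : (x ^ a - 1) * (x ^ b - 1) *
        (∑ j ∈ range (a + 1), ∑ i ∈ range ((a * b - j * b) / a + 1),
          x ^ (a * b - j * b - i * a))
      = (x ^ b - 1) * ∑ j ∈ range (a + 1),
          (x ^ (a * b - j * b + a) - x ^ ((a * b - j * b) % a)) := by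
    rw [← Finset.sum_congr rfl h1, ← Finset.mul_sum]
    ring
  rw [h2, Finset.sum_sub_distrib]
  have h3 : ∑ j ∈ range (a + 1), x ^ (a * b - j * b + a)
      = x ^ a * ∑ k ∈ range (a + 1), (x ^ b) ^ k := by
    rw [← Finset.sum_range_reflect, Finset.mul_sum]
    apply Finset.sum_congr rfl
    intro j hj
    simp only [mem_range, Nat.lt_succ_iff] at hj
    rw [← pow_mul, ← pow_add]
    congr 1
    have h6 : (a + 1 - 1 - j) * b = a * b - j * b := by
      rw [Nat.succ_sub_one, Nat.sub_mul]
    rw [h6]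
    have h7 : j * b ≤ a * b := Nat.mul_le_mul_right b hj
    have h8 : b * j = j * b := mul_comm b j
    omega
  rw [h3]
  have h4 : (x ^ b - 1) * (x ^ a * ∑ k ∈ range (a + 1), (x ^ b) ^ k)
      = x ^ a * ((∑ k ∈ range (a + 1), (x ^ b) ^ k) * (x ^ b - 1)) := by ring
  rw [mul_sub, h4, geom_sum_mul, ← pow_mul, mul_sub, ← pow_add, mul_one]
  have h5 : a + b * (a + 1) = a * b + a + b := by ring
  rw [h5]
  ring


lemma count_aux (a b : ℕ) (ha : 1 ≤ a) (hb : 1 ≤ b) :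
    (∑ j ∈ range (a + 1), ∑ i ∈ range ((a * b - j * b) / a + 1),
      (if a * b - j * b - i * a = 0 then 1 else 0)) = Nat.gcd a b + 1 := by
  set g := Nat.gcd a b with hgdef
  have hg : 0 < g := Nat.gcd_pos_of_pos_left b ha
  set a' := a / g with ha'def
  have haa : a = g * a' := (Nat.mul_div_cancel' (Nat.gcd_dvd_left a b)).symm
  have ha' : 0 < a' := by
    rcases Nat.eq_zero_or_pos a' with h | h
    · rw [h, mul_zero] at haa; omega
    · exact h
  have hcop : Nat.Coprime a' (b / g) := Nat.coprime_div_gcd_div_gcd hg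
  have hbb : b = g * (b / g) := (Nat.mul_div_cancel' (Nat.gcd_dvd_right a b)).symm
  -- inner sum evaluation
  have hinner : ∀ j ∈ range (a + 1),
      (∑ i ∈ range ((a * b - j * b) / a + 1),
        (if a * b - j * b - i * a = 0 then 1 else 0)) = if a' ∣ j then 1 else 0 := by
    intro j hj
    simp only [mem_range, Nat.lt_succ_iff] at hj
    set M := a * b - j * b with hM
    -- a ∣ M ↔ a' ∣ j
    have hdvd_iff : a ∣ M ↔ a' ∣ j := by
      have hsub : M = (a - j) * b := by rw [Nat.sub_mul]
      have h1 : a ∣ (a - j) * b ↔ a' ∣ (a - j) * (b / g) := by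
        constructor
        · intro h
          have : a' * g ∣ (a - j) * (b / g) * g := by
            have : (a - j) * (b / g) * g = (a - j) * b := by
              rw [mul_assoc, mul_comm (b/g) g, ← hbb]
            rw [this, mul_comm a' g, ← haa]; exact h
          exact (Nat.mul_dvd_mul_iff_right hg).mp this
        · intro h
          have h2 : a' * g ∣ (a - j) * (b / g) * g := Nat.mul_dvd_mul_right h g
          have h3 : (a - j) * (b / g) * g = (a - j) * b := by
            rw [mul_assoc, mul_comm (b/g) g, ← hbb]
          rw [h3, mul_comm a' g, ← haa] at h2; exact h2
      have h2 : a' ∣ (a - j) * (b / g) ↔ a' ∣ (a - j) :=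
        ⟨fun h => hcop.dvd_of_dvd_mul_right h, fun h => h.mul_right _⟩
      have h3 : a' ∣ (a - j) ↔ a' ∣ j := by
        have hda : a' ∣ a := ⟨g, by rw [haa, mul_comm]⟩
        constructor
        · intro h
          have := Nat.dvd_sub hda h
          rwa [Nat.sub_sub_self hj] at this
        · intro h; exact Nat.dvd_sub hda h
      rw [hsub, h1, h2, h3]
    by_cases hd : a ∣ M
    · rw [if_pos (hdvd_iff.mp hd)]
      have key : ∀ i ∈ range (M / a + 1),
          (if M - i * a = 0 then 1 else 0) = if i = M / a then 1 else 0 := by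
        intro i hi
        simp only [mem_range, Nat.lt_succ_iff] at hi
        congr 1
        have hle : i * a ≤ M / a * a := Nat.mul_le_mul_right a hi
        have hma : M / a * a = M := Nat.div_mul_cancel hd
        simp only [eq_iff_iff]
        constructor
        · intro h0
          have : i * a = M := by omega
          have : i * a = M / a * a := by omega
          exact Nat.eq_of_mul_eq_mul_right ha this
        · intro h; subst h; omega
      rw [Finset.sum_congr rfl key, Finset.sum_ite_eq' (range (M / a + 1)) (M / a)]
      simp
    · rw [if_neg (fun h => hd (hdvd_iff.mpr h))]
      apply Finset.sum_eq_zero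
      intro i hi
      simp only [mem_range, Nat.lt_succ_iff] at hi
      rw [if_neg]
      intro h0
      have hle : i * a ≤ M / a * a := Nat.mul_le_mul_right a hi
      have hma : M / a * a ≤ M := Nat.div_mul_le_self M a
      have : i * a = M := by omega
      exact hd ⟨i, by rw [mul_comm]; omega⟩
  rw [Finset.sum_congr rfl hinner, Finset.sum_boole]
  -- card of multiples of a' in range (a+1)
  have hsplit : {j ∈ range (a + 1) | a' ∣ j} = insert 0 {j ∈ Ioc 0 a | a' ∣ j} := by
    ext j
    simp only [mem_filter, mem_range, mem_insert, mem_Ioc, Nat.lt_succ_iff]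
    constructor
    · rintro ⟨h1, h2⟩
      rcases Nat.eq_zero_or_pos j with h | h
      · exact Or.inl h
      · exact Or.inr ⟨⟨h, h1⟩, h2⟩
    · rintro (h | ⟨⟨h1, h2⟩, h3⟩)
      · exact ⟨by omega, h ▸ dvd_zero a'⟩
      · exact ⟨h2, h3⟩
  rw [hsplit, Finset.card_insert_of_notMem (by simp), Nat.Ioc_filter_dvd_card_eq_div]
  have : a / a' = g := by rw [haa, mul_comm, Nat.mul_div_cancel_left _ ha']
  simp [this]

lemma two_mul_succ_le_pow (n : ℕ) (h : 5 ≤ n) : 2 * (n + 1) ≤ 2 ^ n := by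
  induction n with
  | zero => omega
  | succ m ih =>
    rcases Nat.lt_or_ge m 5 with h5 | h5
    · interval_cases m <;> simp_all <;> omega
    · have := ih h5
      have : 2 ^ m ≥ 12 := le_trans (by omega) this
      rw [pow_succ]
      omega


theorem gcd_succ_div_mod_base2 (a b : ℕ) (ha : 1 ≤ a) (hb : 1 ≤ b) (hab : 5 ≤ a * b) :
    Nat.gcd a b + 1 =
      (2 ^ (a * b * (a * b + a + b)) / ((2 ^ (a ^ 2 * b) - 1) * (2 ^ (a * b ^ 2) - 1)))
        % 2 ^ (a * b) := by
  set x : ℕ := 2 ^ (a * b) with hxdef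
  have hx32 : 32 ≤ x := by
    calc (32 : ℕ) = 2 ^ 5 := by norm_num
    _ ≤ x := Nat.pow_le_pow_right (by norm_num) hab
  have hx1 : 1 ≤ x := by omega
  have hxa1 : 1 ≤ x ^ a := Nat.one_le_pow _ _ (by omega)
  have hxb1 : 1 ≤ x ^ b := Nat.one_le_pow _ _ (by omega)
  have e1 : (2 : ℕ) ^ (a ^ 2 * b) = x ^ a := by
    rw [hxdef, ← pow_mul]; congr 1; ring
  have e2 : (2 : ℕ) ^ (a * b ^ 2) = x ^ b := by
    rw [hxdef, ← pow_mul]; congr 1; ring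
  have e3 : (2 : ℕ) ^ (a * b * (a * b + a + b)) = x ^ (a * b + a + b) := by
    rw [hxdef, ← pow_mul]
  set qN : ℕ := ∑ j ∈ range (a + 1), ∑ i ∈ range ((a * b - j * b) / a + 1),
      x ^ (a * b - j * b - i * a) with hqdef
  set TN : ℕ := ∑ j ∈ range (a + 1), x ^ ((a * b - j * b) % a) with hTdef
  -- key identity over ℕ
  have hkeyN : (x ^ a - 1) * (x ^ b - 1) * qN + (x ^ a + (x ^ b - 1) * TN)
      = x ^ (a * b + a + b) := by
    have hk := key (x : ℤ) a b hb
    zify [hxa1, hxb1, hqdef, hTdef]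
    push_cast
    linarith [hk]
  -- bound: remainder < divisor
  have hTle : TN ≤ (a + 1) * x ^ (a - 1) := by
    rw [hTdef]
    calc ∑ j ∈ range (a + 1), x ^ ((a * b - j * b) % a)
        ≤ ∑ j ∈ range (a + 1), x ^ (a - 1) := by
          apply Finset.sum_le_sum
          intro j _
          apply Nat.pow_le_pow_right (by omega)
          have := Nat.mod_lt (a * b - j * b) (show 0 < a by omega)
          omega
      _ = (a + 1) * x ^ (a - 1) := by
          rw [Finset.sum_const, card_range, smul_eq_mul]
  have h2a : 2 * (a + 1) ≤ x := by
    have h1 : a ≤ a * b := Nat.le_mul_of_pos_right a hb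
    have := two_mul_succ_le_pow (a * b) hab
    omega
  have hCA : 2 * ((a + 1) * x ^ (a - 1)) ≤ x ^ a := by
    calc 2 * ((a + 1) * x ^ (a - 1)) = (2 * (a + 1)) * x ^ (a - 1) := by ring
      _ ≤ x * x ^ (a - 1) := Nat.mul_le_mul_right _ h2a
      _ = x ^ a := by rw [← pow_succ']; congr 1; omega
  have hrlt : x ^ a + (x ^ b - 1) * TN < (x ^ a - 1) * (x ^ b - 1) := by
    have hstep : x ^ a + (x ^ b - 1) * TN ≤ x ^ a + (x ^ b - 1) * ((a + 1) * x ^ (a - 1)) :=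
      Nat.add_le_add_left (Nat.mul_le_mul_left _ hTle) _
    have hxa32 : 32 ≤ x ^ a := le_trans hx32 (Nat.le_self_pow (by omega) x)
    have hxb32 : 32 ≤ x ^ b := le_trans hx32 (Nat.le_self_pow (by omega) x)
    have hfin : x ^ a + (x ^ b - 1) * ((a + 1) * x ^ (a - 1)) < (x ^ a - 1) * (x ^ b - 1) := by
      set A := x ^ a
      set B := x ^ b
      set C := (a + 1) * x ^ (a - 1)
      zify [hxa1, hxb1]
      nlinarith [hCA, hxa32, hxb32]
    omega
  -- division evaluates to qN
  have hD : 0 < (x ^ a - 1) * (x ^ b - 1) := lt_of_le_of_lt (Nat.zero_le _) hrlt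
  have hdiv : x ^ (a * b + a + b) / ((x ^ a - 1) * (x ^ b - 1)) = qN := by
    rw [← hkeyN, add_comm, Nat.add_mul_div_left _ _ hD, Nat.div_eq_of_lt hrlt, zero_add]
  -- mod evaluates to gcd+1
  have hmod : qN % x = Nat.gcd a b + 1 := by
    have hsplit : qN = (∑ j ∈ range (a + 1), ∑ i ∈ range ((a * b - j * b) / a + 1),
          (if a * b - j * b - i * a = 0 then 1 else 0))
        + x * (∑ j ∈ range (a + 1), ∑ i ∈ range ((a * b - j * b) / a + 1),
          (if a * b - j * b - i * a = 0 then 0 else x ^ (a * b - j * b - i * a - 1))) := by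
      rw [hqdef, Finset.mul_sum, ← Finset.sum_add_distrib]
      apply Finset.sum_congr rfl
      intro j _
      rw [Finset.mul_sum, ← Finset.sum_add_distrib]
      apply Finset.sum_congr rfl
      intro i _
      set e := a * b - j * b - i * a
      rcases Nat.eq_zero_or_pos e with h | h
      · simp [h]
      · rw [if_neg (by omega), if_neg (by omega), zero_add, ← pow_succ']
        congr 1
        omega
    have hglt : Nat.gcd a b + 1 < x := by
      have h1 : Nat.gcd a b ≤ a := Nat.gcd_le_left b ha
      have h2 : a ≤ a * b := Nat.le_mul_of_pos_right a hb
      omega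
    rw [hsplit, count_aux a b ha hb, Nat.add_mul_mod_self_left,
      Nat.mod_eq_of_lt hglt]
  rw [e3, e1, e2, hdiv, hmod]
end
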